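/- arXiv:1206.2564 — 2 statements merged into one kernel-verified Lean document; each statement's English description precedes it below -/
import Mathlib

section
/- Let G be a locally compact totally disconnected group and H a closed subgroup with G/H compact. If (π,V) is a smooth representation of G of finite type, then the restriction of π to H is a smooth representation of H of finite type. -/
open scoped TensorProduct

universe u v w

noncomputable section

/-- A representation is smooth if every vector has open stabilizer. -/
def IsSmoothRep {G : Type*} [Group G] [TopologicalSpace G] {V : Type*} [AddCommGroup V]
    [Module ℂ V] (ρ : Representation ℂ G V) : Prop :=
  ∀ v : V, IsOpen {g : G | ρ g v = v}

/-- Irreducible: nonzero, and no proper nontrivial invariant subspace. -/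
def IsIrreducibleRep {G : Type*} [Group G] {V : Type*} [AddCommGroup V] [Module ℂ V]
    (ρ : Representation ℂ G V) : Prop :=
  Nontrivial V ∧ ∀ p : Submodule ℂ V, (∀ (g : G) (v : V), v ∈ p → ρ g v ∈ p) → p = ⊥ ∨ p = ⊤

/-- The space of `G`-equivariant linear maps `Hom_G(ρ, π)`. -/
def repHom {G : Type*} [Group G] {V W : Type*} [AddCommGroup V] [Module ℂ V] [AddCommGroup W]
    [Module ℂ W] (ρ : Representation ℂ G V) (π : Representation ℂ G W) :
    Submodule ℂ (V →ₗ[ℂ] W) where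
  carrier := {f | ∀ (g : G) (v : V), f (ρ g v) = π g (f v)}
  add_mem' := by
    intro f₁ f₂ h₁ h₂ g v
    simp [h₁ g v, h₂ g v]
  zero_mem' := by intro g v; simp
  smul_mem' := by intro c f hf g v; simp [hf g v]

/-- Finite type: generated by finitely many vectors under the `G`-action. -/
def IsFiniteTypeRep {G : Type*} [Group G] {V : Type*} [AddCommGroup V] [Module ℂ V]
    (ρ : Representation ℂ G V) : Prop :=
  ∃ s : Finset V, Submodule.span ℂ {v | ∃ (g : G) (x : V), x ∈ s ∧ v = ρ g x} = ⊤

/-- Subspace of vectors fixed by a subgroup `K`. -/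
def fixedBy {G : Type*} [Group G] {W : Type*} [AddCommGroup W] [Module ℂ W]
    (π : Representation ℂ G W) (K : Subgroup G) : Submodule ℂ W where
  carrier := {w | ∀ k ∈ K, π k w = w}
  add_mem' := by intro a b ha hb k hk; simp [ha k hk, hb k hk]
  zero_mem' := by intro k hk; simp
  smul_mem' := by intro c a ha k hk; simp [ha k hk]

/-- Admissible: fixed vectors of every compact open subgroup form a finite-dimensional space. -/
def IsAdmissibleRep {G : Type*} [Group G] [TopologicalSpace G] {W : Type*} [AddCommGroup W]
    [Module ℂ W] (π : Representation ℂ G W) : Prop :=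
  ∀ K : Subgroup G, IsOpen (K : Set G) → IsCompact (K : Set G) →
    FiniteDimensional ℂ (fixedBy π K)

/-!
The pointwise stabilizer `K` of a finite generating set `s` is open, so the images of the cosets
`K b` are open in the compact space `G ⧸ H` and finitely many of them cover it: `G = K t H` with
`t` finite. Writing `g⁻¹ = k a h` gives `π g x = π h⁻¹ (π a⁻¹ x)` for `x ∈ s`, so the finite set
`π(t⁻¹) s` generates `V` under `H`.
-/

section

open scoped Pointwise

variable {G : Type*} [Group G] {V : Type*} [AddCommGroup V] [Module ℂ V]

theorem IsSmoothRep.comp [TopologicalSpace G] {π : Representation ℂ G V} (hπ : IsSmoothRep π)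
    {H : Type*} [Group H] [TopologicalSpace H] {f : H →* G} (hf : Continuous f) :
    IsSmoothRep (π.comp f) :=
  fun v => (hπ v).preimage hf

def repFixingSubgroup (π : Representation ℂ G V) (s : Set V) : Subgroup G where
  carrier := {g | ∀ x ∈ s, π g x = x}
  one_mem' := by simp
  mul_mem' := by
    intro g₁ g₂ h₁ h₂ x hx
    rw [map_mul, Module.End.mul_apply, h₂ x hx, h₁ x hx]
  inv_mem' := by
    intro g hg x hx
    nth_rewrite 1 [← hg x hx]
    exact Representation.inv_self_apply π g x

theorem isOpen_repFixingSubgroup [TopologicalSpace G] {π : Representation ℂ G V}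
    (hπ : IsSmoothRep π) {s : Set V} (hs : s.Finite) :
    IsOpen (repFixingSubgroup π s : Set G) := by
  have : (repFixingSubgroup π s : Set G) = ⋂ x ∈ s, {g | π g x = x} := by
    ext g
    simp [repFixingSubgroup]
  rw [this]
  exact hs.isOpen_biInter fun x _ => hπ x

theorem Subgroup.exists_finset_eq_mul_mul_of_isOpen [TopologicalSpace G]
    [SeparatelyContinuousMul G] (H : Subgroup G) [CompactSpace (G ⧸ H)] {K : Subgroup G}
    (hK : IsOpen (K : Set G)) :
    ∃ t : Finset G, ∀ g : G, ∃ k ∈ K, ∃ a ∈ t, ∃ h ∈ H, g = k * a * h := by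
  obtain ⟨t, ht⟩ := isCompact_univ.elim_finite_subcover
    (fun b : G => ((↑) : G → G ⧸ H) '' ((K : Set G) * {b}))
    (fun b => QuotientGroup.isOpenMap_coe _ hK.mul_right)
    (fun q _ => by
      obtain ⟨b, rfl⟩ := QuotientGroup.mk_surjective q
      exact Set.mem_iUnion.2 ⟨b, b, ⟨1, K.one_mem, b, rfl, one_mul b⟩, rfl⟩)
  refine ⟨t, fun g => ?_⟩
  obtain ⟨a, ha, k, hk, hq⟩ := by simpa using ht (Set.mem_univ (g : G ⧸ H))
  exact ⟨k * a⁻¹, hk, a, ha, k⁻¹ * g, QuotientGroup.eq.1 hq, by group⟩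

theorem IsFiniteTypeRep.comp_subtype_of_forall_eq_mul_mul {π : Representation ℂ G V}
    {s : Finset V} (hs : Submodule.span ℂ {v | ∃ (g : G) (x : V), x ∈ s ∧ v = π g x} = ⊤)
    (H : Subgroup G) {t : Finset G}
    (ht : ∀ g : G, ∃ k ∈ repFixingSubgroup π s, ∃ a ∈ t, ∃ h ∈ H, g = k * a * h) :
    IsFiniteTypeRep (π.comp H.subtype) := by
  classical
  refine ⟨(t ×ˢ s).image fun p => π p.1⁻¹ p.2, ?_⟩
  rw [eq_top_iff, ← hs, Submodule.span_le]
  rintro _ ⟨g, x, hx, rfl⟩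
  obtain ⟨k, hk, a, ha, h, hh, hg⟩ := ht g⁻¹
  -- `g = h⁻¹ a⁻¹ k⁻¹` and `k⁻¹` fixes `x`
  have hgx : π g x = π (h⁻¹ : G) (π a⁻¹ x) := by
    rw [inv_eq_iff_eq_inv.1 hg, mul_inv_rev, mul_inv_rev, map_mul, map_mul,
      Module.End.mul_apply, Module.End.mul_apply, (inv_mem hk) x hx]
  exact Submodule.subset_span
    ⟨⟨h⁻¹, H.inv_mem hh⟩, π a⁻¹ x, Finset.mem_image.2 ⟨(a, x), Finset.mem_product.2 ⟨ha, hx⟩, rfl⟩,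
      hgx⟩

end

theorem stmt_2_general {G : Type u} [Group G] [TopologicalSpace G] [IsTopologicalGroup G]
    (H : Subgroup G) (hcpt : CompactSpace (G ⧸ H))
    {V : Type v} [AddCommGroup V] [Module ℂ V] (π : Representation ℂ G V)
    (hsmooth : IsSmoothRep π) (hft : IsFiniteTypeRep π) :
    IsSmoothRep (π.comp H.subtype) ∧ IsFiniteTypeRep (π.comp H.subtype) := by
  refine ⟨hsmooth.comp continuous_subtype_val, ?_⟩
  obtain ⟨s, hs⟩ := hft
  obtain ⟨t, ht⟩ :=
    H.exists_finset_eq_mul_mul_of_isOpen (isOpen_repFixingSubgroup hsmooth s.finite_toSet)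
  exact IsFiniteTypeRep.comp_subtype_of_forall_eq_mul_mul hs H ht

/-- if `H` is a closed subgroup of the l.c.t.d. group `G` with `G/H` compact and
`(π,V)` is a smooth representation of `G` of finite type, then `π|_H` is a smooth
representation of `H` of finite type. -/
theorem stmt_2 {G : Type u} [Group G] [TopologicalSpace G] [IsTopologicalGroup G]
    [LocallyCompactSpace G] [TotallyDisconnectedSpace G]
    (H : Subgroup G) (hHclosed : IsClosed (H : Set G)) (hcpt : CompactSpace (G ⧸ H))
    {V : Type v} [AddCommGroup V] [Module ℂ V] (π : Representation ℂ G V)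
    (hsmooth : IsSmoothRep π) (hft : IsFiniteTypeRep π) :
    IsSmoothRep (π.comp H.subtype) ∧ IsFiniteTypeRep (π.comp H.subtype) :=
  stmt_2_general H hcpt π hsmooth hft
end
end

section
/- Let G_1 be a locally compact totally disconnected group, (π_1,V_1) an admissible irreducible smooth representation of G_1, G_2 another l.c.t.d. group, and (π_2,V_2) a smooth representation of G_2. If V is a (G_1 × G_2)-invariant subspace of V_1 ⊗ V_2 (with the external tensor product action), then there exists a G_2-invariant subspace V_2' of V_2 with V = V_1 ⊗ V_2'. -/
/-!
The commutant of `π₁` is `ℂ` (Schur): a compact open subgroup `K` fixing some `v ≠ 0` makes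
`V₁^K` a nonzero finite-dimensional space stable under any intertwiner `f`, so `f` has an
eigenvalue `c`, and `ker (f - c)` is a nonzero invariant subspace, hence everything. Jacobson
density then says that on any finite set every linear endomorphism of `V₁` agrees with an
element of the algebra generated by `π₁(G₁)`; since an element of `V₁ ⊗ V₂` involves only finitely
many vectors of `V₁`, `p` is stable under all `f ⊗ 1`. Contracting `x ∈ p` against the coordinate
functionals of a basis of `V₁` then writes `x` as `∑ bᵢ ⊗ wᵢ` with every `V₁ ⊗ wᵢ ⊆ p`.
-/

open scoped TensorProduct

universe u v w

noncomputable section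

/-- External tensor product of representations of two groups. -/
def extTensor {G₁ G₂ : Type*} [Group G₁] [Group G₂] {V₁ V₂ : Type*}
    [AddCommGroup V₁] [Module ℂ V₁] [AddCommGroup V₂] [Module ℂ V₂]
    (π₁ : Representation ℂ G₁ V₁) (π₂ : Representation ℂ G₂ V₂) :
    Representation ℂ (G₁ × G₂) (V₁ ⊗[ℂ] V₂) :=
  Representation.tprod (π₁.comp (MonoidHom.fst G₁ G₂)) (π₂.comp (MonoidHom.snd G₁ G₂))

open scoped Pointwise

theorem exists_isOpen_isCompact_subgroup (G : Type*) [Group G] [TopologicalSpace G]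
    [IsTopologicalGroup G] [LocallyCompactSpace G] [TotallyDisconnectedSpace G] :
    ∃ K : Subgroup G, IsOpen (K : Set G) ∧ IsCompact (K : Set G) := by
  obtain ⟨C, hC, hC1⟩ := exists_compact_mem_nhds (1 : G)
  obtain ⟨W, hWclopen, h1W, hWC⟩ :=
    loc_compact_Haus_tot_disc_of_zero_dim.mem_nhds_iff.mp (interior_mem_nhds.mpr hC1)
  have hW : IsCompact W := hC.of_isClosed_subset hWclopen.1 (hWC.trans interior_subset)
  obtain ⟨T, hT, hWT⟩ := compact_open_separated_mul_right hW hWclopen.2 subset_rfl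
  let K := Subgroup.closure (T ∩ T⁻¹)
  have hKW : ∀ g ∈ K, ∀ w ∈ W, w * g ∈ W := by
    intro g hg
    induction hg using Subgroup.closure_induction'' with
    | mem x hx => exact fun w hw ↦ hWT (Set.mul_mem_mul hw hx.1)
    | inv_mem x hx => exact fun w hw ↦ hWT (Set.mul_mem_mul hw hx.2)
    | one => simp
    | mul x y _ _ hx hy => exact fun w hw ↦ mul_assoc w x y ▸ hy _ (hx w hw)
  have hK : IsOpen (K : Set G) := K.isOpen_of_mem_nhds (g := 1) <|
    Filter.mem_of_superset (Filter.inter_mem hT (inv_mem_nhds_one G hT)) Subgroup.subset_closure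
  refine ⟨K, hK, hW.of_isClosed_subset (K.isClosed_of_isOpen hK) fun g hg ↦ ?_⟩
  simpa using hKW g hg 1 h1W

namespace TensorProduct

variable {R M N P : Type*} [CommSemiring R] [AddCommMonoid M] [Module R M] [AddCommMonoid N]
  [Module R N] [AddCommMonoid P] [Module R P]

theorem exists_finset_rTensor_eq (x : M ⊗[R] N) :
    ∃ s : Finset M, ∀ f g : M →ₗ[R] P, (∀ m ∈ s, f m = g m) → f.rTensor N x = g.rTensor N x := by
  classical
  induction x using TensorProduct.induction_on with
  | zero => exact ⟨∅, by simp⟩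
  | tmul m n => exact ⟨{m}, fun f g h ↦ by simp [h m (Finset.mem_singleton_self m)]⟩
  | add x y hx hy =>
    obtain ⟨s, hs⟩ := hx
    obtain ⟨t, ht⟩ := hy
    refine ⟨s ∪ t, fun f g h ↦ ?_⟩
    rw [map_add, map_add, hs f g fun m hm ↦ h m (Finset.mem_union_left t hm),
      ht f g fun m hm ↦ h m (Finset.mem_union_right s hm)]

theorem rTensor_mem_of_mem_adjoin {s : Set (Module.End R M)} {p : Submodule R (M ⊗[R] N)}
    (hs : ∀ f ∈ s, ∀ x ∈ p, f.rTensor N x ∈ p) {a : Module.End R M}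
    (ha : a ∈ Algebra.adjoin R s) : ∀ x ∈ p, a.rTensor N x ∈ p := by
  induction ha using Algebra.adjoin_induction with
  | mem f hf => exact hs f hf
  | algebraMap r =>
    exact fun x hx ↦ by
      simpa [Algebra.algebraMap_eq_smul_one, Module.End.one_eq_id] using p.smul_mem r hx
  | add f g _ _ hf hg =>
    exact fun x hx ↦ by rw [LinearMap.rTensor_add]; exact p.add_mem (hf x hx) (hg x hx)
  | mul f g _ _ hf hg => exact fun x hx ↦ by rw [LinearMap.rTensor_mul]; exact hf _ (hg x hx)

theorem tmul_lid_rTensor (φ : M →ₗ[R] R) (m : M) (x : M ⊗[R] N) :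
    m ⊗ₜ TensorProduct.lid R N (φ.rTensor N x) = (φ.smulRight m).rTensor N x := by
  induction x using TensorProduct.induction_on with
  | zero => simp
  | tmul m' n => simp [smul_tmul']
  | add x y hx hy => simp [tmul_add, hx, hy]

theorem eq_range_map_subtype_of_rTensor_mem [Module.Free R M] {p : Submodule R (M ⊗[R] N)}
    (hp : ∀ f : Module.End R M, ∀ x ∈ p, f.rTensor N x ∈ p) :
    p = LinearMap.range (map LinearMap.id (⨅ m : M, p.comap (mk R M N m)).subtype) := by
  classical
  set q := ⨅ m : M, p.comap (mk R M N m)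
  refine le_antisymm (fun x hx ↦ ?_) ?_
  · let b := Module.Free.chooseBasis R M
    have hq : ∀ i, equivFinsuppOfBasisLeft b x i ∈ q := fun i ↦ by
      simp only [q, Submodule.mem_iInf, Submodule.mem_comap, mk_apply,
        equivFinsuppOfBasisLeft_apply, tmul_lid_rTensor]
      exact fun m ↦ hp _ x hx
    rw [← (equivFinsuppOfBasisLeft b).symm_apply_apply x, equivFinsuppOfBasisLeft_symm_apply]
    exact Submodule.finsuppSum_mem _ _ _ _ fun i _ ↦ ⟨b i ⊗ₜ ⟨_, hq i⟩, rfl⟩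
  · rw [range_map_eq_span_tmul, Submodule.span_le]
    rintro _ ⟨m, n, rfl⟩
    exact Submodule.mem_iInf _ |>.mp n.2 m

end TensorProduct

section Schur

variable {G V : Type*} [Group G] [AddCommGroup V] [Module ℂ V] {π : Representation ℂ G V}

theorem IsSmoothRep.exists_mem_fixedBy [TopologicalSpace G] [IsTopologicalGroup G]
    [LocallyCompactSpace G] [TotallyDisconnectedSpace G] (hsm : IsSmoothRep π) (v : V) :
    ∃ K : Subgroup G, IsOpen (K : Set G) ∧ IsCompact (K : Set G) ∧ v ∈ fixedBy π K := by
  obtain ⟨K₀, hK₀, hK₀c⟩ := exists_isOpen_isCompact_subgroup G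
  let K := K₀ ⊓ (MulAction.stabilizer (Module.End ℂ V)ˣ v).comap π.asGroupHom
  have hK : IsOpen (K : Set G) := hK₀.inter (hsm v)
  exact ⟨K, hK, hK₀c.of_isClosed_subset (K.isClosed_of_isOpen hK) fun _ hg ↦ hg.1,
    fun _ hg ↦ hg.2⟩

theorem IsIrreducibleRep.eq_top_of_mem (hirr : IsIrreducibleRep π) {p : Submodule ℂ V}
    (hp : ∀ (g : G) (v : V), v ∈ p → π g v ∈ p) {v : V} (hv : v ∈ p) (hv₀ : v ≠ 0) : p = ⊤ :=
  (hirr.2 p hp).resolve_left fun h ↦ hv₀ (by simpa [h] using hv)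

theorem IsIrreducibleRep.exists_eq_smul_of_commute [TopologicalSpace G] [IsTopologicalGroup G]
    [LocallyCompactSpace G] [TotallyDisconnectedSpace G] (hsm : IsSmoothRep π)
    (hirr : IsIrreducibleRep π) (hadm : IsAdmissibleRep π) {f : Module.End ℂ V}
    (hf : ∀ g, Commute f (π g)) : ∃ c : ℂ, ∀ v, f v = c • v := by
  obtain ⟨v₀, hv₀⟩ := @exists_ne V hirr.1 0
  obtain ⟨K, hK, hKc, hv₀K⟩ := hsm.exists_mem_fixedBy v₀
  have := hadm K hK hKc
  have : Nontrivial (fixedBy π K) := ⟨⟨⟨v₀, hv₀K⟩, 0, by simpa using hv₀⟩⟩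
  have hfK : ∀ v ∈ fixedBy π K, f v ∈ fixedBy π K := fun v hv k hk ↦ by
    rw [← Module.End.mul_apply, ← (hf k).eq, Module.End.mul_apply, hv k hk]
  obtain ⟨c, hc⟩ := Module.End.exists_eigenvalue (f.restrict hfK)
  obtain ⟨x, hx⟩ := hc.exists_hasEigenvector
  have hker : LinearMap.ker (f - c • 1) = ⊤ := by
    refine hirr.eq_top_of_mem (fun g v hv ↦ ?_) (v := x) ?_ (by simpa using hx.2)
    · rw [LinearMap.mem_ker] at hv ⊢
      rw [← Module.End.mul_apply, ((hf g).sub_left ((Commute.one_left _).smul_left c)).eq,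
        Module.End.mul_apply, hv, map_zero]
    · simpa [sub_eq_zero] using congrArg Subtype.val hx.apply_eq_smul
  refine ⟨c, fun v ↦ ?_⟩
  have hv : v ∈ LinearMap.ker (f - c • 1) := hker ▸ Submodule.mem_top
  simpa [sub_eq_zero] using hv

end Schur

section Density

variable {G V : Type*} [Group G] [AddCommGroup V] [Module ℂ V] {π : Representation ℂ G V}

theorem IsIrreducibleRep.isSimpleModule_adjoin (hirr : IsIrreducibleRep π) :
    IsSimpleModule (Algebra.adjoin ℂ (Set.range π)) V := by
  have := hirr.1
  refine { eq_bot_or_eq_top := fun N ↦ ?_ }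
  have hN : ∀ (g : G) (v : V), v ∈ N.restrictScalars ℂ → π g v ∈ N.restrictScalars ℂ :=
    fun g _ hv ↦ N.smul_mem ⟨π g, Algebra.subset_adjoin ⟨g, rfl⟩⟩ hv
  simpa using hirr.2 _ hN

theorem IsIrreducibleRep.exists_mem_adjoin_eqOn (hirr : IsIrreducibleRep π)
    (hschur : ∀ f : Module.End ℂ V, (∀ g, Commute f (π g)) → ∃ c : ℂ, ∀ v, f v = c • v)
    (f : Module.End ℂ V) (s : Finset V) :
    ∃ a ∈ Algebra.adjoin ℂ (Set.range π), ∀ v ∈ s, f v = a v := by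
  let A := Algebra.adjoin ℂ (Set.range π)
  have := hirr.isSimpleModule_adjoin
  -- `f` commutes with every `A`-linear endomorphism, these being scalars by Schur.
  let F : Module.End (Module.End A V) V :=
    { toFun := f
      map_add' := f.map_add
      map_smul' := fun φ v ↦ by
        obtain ⟨c, hc⟩ := hschur (φ.restrictScalars ℂ) fun g ↦ LinearMap.ext fun w ↦
          φ.map_smul ⟨π g, Algebra.subset_adjoin ⟨g, rfl⟩⟩ w
        have hc' : ∀ w, φ w = c • w := hc
        simp [Module.End.smul_def, hc'] }
  obtain ⟨a, ha⟩ := jacobson_density F s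
  exact ⟨a, a.2, ha⟩

theorem IsIrreducibleRep.rTensor_mem {N : Type*} [AddCommGroup N] [Module ℂ N]
    (hirr : IsIrreducibleRep π)
    (hschur : ∀ f : Module.End ℂ V, (∀ g, Commute f (π g)) → ∃ c : ℂ, ∀ v, f v = c • v)
    {p : Submodule ℂ (V ⊗[ℂ] N)} (hp : ∀ g, ∀ x ∈ p, (π g).rTensor N x ∈ p)
    (f : Module.End ℂ V) : ∀ x ∈ p, f.rTensor N x ∈ p := by
  intro x hx
  obtain ⟨s, hs⟩ := TensorProduct.exists_finset_rTensor_eq (P := V) x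
  obtain ⟨a, ha, hfa⟩ := hirr.exists_mem_adjoin_eqOn hschur f s
  rw [hs f a hfa]
  exact TensorProduct.rTensor_mem_of_mem_adjoin (by rintro _ ⟨g, rfl⟩; exact hp g) ha x hx

end Density

theorem extTensor_apply {G₁ G₂ V₁ V₂ : Type*} [Group G₁] [Group G₂] [AddCommGroup V₁]
    [Module ℂ V₁] [AddCommGroup V₂] [Module ℂ V₂] (π₁ : Representation ℂ G₁ V₁)
    (π₂ : Representation ℂ G₂ V₂) (g : G₁ × G₂) :
    extTensor π₁ π₂ g = TensorProduct.map (π₁ g.1) (π₂ g.2) :=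
  rfl

theorem stmt_6_general {G₁ : Type v} [Group G₁] [TopologicalSpace G₁] [IsTopologicalGroup G₁]
    [LocallyCompactSpace G₁] [TotallyDisconnectedSpace G₁]
    {G₂ : Type w} [Group G₂]
    {V₁ : Type u} [AddCommGroup V₁] [Module ℂ V₁] (π₁ : Representation ℂ G₁ V₁)
    (h₁sm : IsSmoothRep π₁) (h₁irr : IsIrreducibleRep π₁) (h₁adm : IsAdmissibleRep π₁)
    {V₂ : Type u} [AddCommGroup V₂] [Module ℂ V₂] (π₂ : Representation ℂ G₂ V₂)
    (p : Submodule ℂ (V₁ ⊗[ℂ] V₂))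
    (hpinv : ∀ (g : G₁ × G₂) (x : V₁ ⊗[ℂ] V₂), x ∈ p → extTensor π₁ π₂ g x ∈ p) :
    ∃ p₂ : Submodule ℂ V₂, (∀ (g : G₂) (v : V₂), v ∈ p₂ → π₂ g v ∈ p₂) ∧
      p = LinearMap.range (TensorProduct.map (LinearMap.id : V₁ →ₗ[ℂ] V₁) p₂.subtype) := by
  have hp : ∀ f : Module.End ℂ V₁, ∀ x ∈ p, f.rTensor V₂ x ∈ p :=
    h₁irr.rTensor_mem (fun _ ↦ h₁irr.exists_eq_smul_of_commute h₁sm h₁adm)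
      fun g x hx ↦ by
        simpa [extTensor_apply, Module.End.one_eq_id, LinearMap.rTensor] using hpinv (g, 1) x hx
  refine ⟨⨅ v : V₁, p.comap (TensorProduct.mk ℂ V₁ V₂ v), fun g w hw ↦ ?_,
    TensorProduct.eq_range_map_subtype_of_rTensor_mem hp⟩
  simp only [Submodule.mem_iInf, Submodule.mem_comap, TensorProduct.mk_apply] at hw ⊢
  exact fun v ↦ by simpa [extTensor_apply] using hpinv (1, g) _ (hw v)

/-- if `π₁` is an admissible irreducible smooth representation of `G₁` and
`π₂` a smooth representation of `G₂`, then every `(G₁ × G₂)`-invariant subspace of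
`V₁ ⊗ V₂` is of the form `V₁ ⊗ V₂'` for some `G₂`-invariant subspace `V₂'` of `V₂`. -/
theorem stmt_6 {G₁ : Type v} [Group G₁] [TopologicalSpace G₁] [IsTopologicalGroup G₁]
    [LocallyCompactSpace G₁] [TotallyDisconnectedSpace G₁]
    {G₂ : Type w} [Group G₂] [TopologicalSpace G₂] [IsTopologicalGroup G₂]
    [LocallyCompactSpace G₂] [TotallyDisconnectedSpace G₂]
    {V₁ : Type u} [AddCommGroup V₁] [Module ℂ V₁] (π₁ : Representation ℂ G₁ V₁)
    (h₁sm : IsSmoothRep π₁) (h₁irr : IsIrreducibleRep π₁) (h₁adm : IsAdmissibleRep π₁)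
    {V₂ : Type u} [AddCommGroup V₂] [Module ℂ V₂] (π₂ : Representation ℂ G₂ V₂)
    (h₂sm : IsSmoothRep π₂)
    (p : Submodule ℂ (V₁ ⊗[ℂ] V₂))
    (hpinv : ∀ (g : G₁ × G₂) (x : V₁ ⊗[ℂ] V₂), x ∈ p → extTensor π₁ π₂ g x ∈ p) :
    ∃ p₂ : Submodule ℂ V₂, (∀ (g : G₂) (v : V₂), v ∈ p₂ → π₂ g v ∈ p₂) ∧
      p = LinearMap.range (TensorProduct.map (LinearMap.id : V₁ →ₗ[ℂ] V₁) p₂.subtype) :=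
  stmt_6_general π₁ h₁sm h₁irr h₁adm π₂ p hpinv
end
end
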